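/- arXiv:2510.25455 — 4 statements merged into one kernel-verified Lean document; each statement's English description precedes it below -/
import Mathlib

section
/- Let A be an associative algebra with 1 over a field K, let M be a simple A-module with trivial annihilator, and suppose vxw = wxv for all x ∈ A, where v, w ∈ A are fixed elements with v acting nontrivially on M. Then w ∈ K·v. -/
theorem stmt_0 {K A M : Type*} [Field K] [Ring A] [Algebra K A]
    [AddCommGroup M] [Module A M] [Module K M] [IsScalarTower K A M]
    (hsimple : IsSimpleModule A M)
    (hfaithful : ∀ a : A, (∀ m : M, a • m = 0) → a = 0)
    (hend : ∀ f : M →ₗ[A] M, ∃ c : K, ∀ m : M, f m = c • m)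
    (v w : A) (hcomm : ∀ x : A, v * x * w = w * x * v)
    (hv : ∃ m : M, v • m ≠ 0) :
    ∃ C : K, w = C • v := by
  classical
  obtain ⟨m, hm⟩ := hv
  set n : M := v • m with hn
  set p : M := w • m with hp
  -- key kernel inclusion
  have hker : ∀ x : A, x • n = 0 → x • p = 0 := by
    intro x hx
    by_contra hz
    have hspan : Submodule.span A {x • p} = ⊤ := by
      rcases eq_bot_or_eq_top (Submodule.span A {x • p}) with h | h
      · exact absurd (h ▸ Submodule.mem_span_singleton_self (x • p))
          (by simp [hz])
      · exact h
    have hvkill : ∀ u : M, v • u = 0 := by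
      intro u
      have hu : u ∈ Submodule.span A {x • p} := hspan ▸ Submodule.mem_top
      obtain ⟨a, ha⟩ := Submodule.mem_span_singleton.mp hu
      have : v • u = (v * (a * x) * w) • m := by
        rw [← ha, hp, smul_smul, smul_smul, smul_smul]
        simp only [mul_assoc]
      rw [this, hcomm (a * x)]
      have : (w * (a * x) * v) • m = w • ((a * x) • n) := by
        rw [hn, smul_smul, smul_smul, mul_assoc]
      rw [this, mul_smul, hx, smul_zero, smul_zero]
    exact hm (hvkill m)
  -- the A-linear map A → M, x ↦ x • n
  let π : A →ₗ[A] M :=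
    { toFun := fun x => x • n
      map_add' := fun a b => add_smul a b n
      map_smul' := fun a x => mul_smul a x n }
  have hπ : ∀ x : A, π x = x • n := fun _ => rfl
  have hsurj : Function.Surjective π := by
    have hrange : LinearMap.range π = ⊤ := by
      rcases eq_bot_or_eq_top (LinearMap.range π) with h | h
      · exfalso
        have : π 1 = 0 := by
          have := h ▸ LinearMap.mem_range_self π 1
          simpa using this
        rw [hπ, one_smul] at this
        exact hm this
      · exact h
    exact LinearMap.range_eq_top.mp hrange
  -- eat the kernel: π x = π y → x • p = y • p
  have hwd : ∀ x y : A, π x = π y → x • p = y • p := by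
    intro x y hxy
    have : (x - y) • n = 0 := by
      rw [sub_smul, ← hπ, ← hπ, hxy, sub_self]
    have := hker _ this
    rw [sub_smul, sub_eq_zero] at this
    exact this
  -- define f : M →ₗ[A] M
  let g : M → M := fun z => (hsurj z).choose • p
  have hg : ∀ x : A, g (π x) = x • p := by
    intro x
    exact hwd _ _ (hsurj (π x)).choose_spec
  let f : M →ₗ[A] M :=
    { toFun := g
      map_add' := by
        intro z₁ z₂
        obtain ⟨x₁, hx₁⟩ := hsurj z₁
        obtain ⟨x₂, hx₂⟩ := hsurj z₂
        show g (z₁ + z₂) = g z₁ + g z₂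
        rw [← hx₁, ← hx₂, ← map_add, hg, hg, hg, add_smul]
      map_smul' := by
        intro a z
        obtain ⟨x, hx⟩ := hsurj z
        show g (a • z) = a • g z
        rw [← hx, ← map_smul, hg, hg, smul_eq_mul, mul_smul] }
  obtain ⟨c, hc⟩ := hend f
  have hfx : ∀ x : A, x • p = c • (x • n) := by
    intro x
    have := hc (π x)
    rw [show f (π x) = g (π x) from rfl, hg, hπ] at this
    exact this
  have hcs : ∀ (a : A) (c : K) (z : M), a • (c • z) = c • (a • z) := by
    intro a c z
    rw [← algebraMap_smul A c z, ← algebraMap_smul A c (a • z), smul_smul,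
      smul_smul, Algebra.commutes]
  refine ⟨c, eq_of_sub_eq_zero (hfaithful (w - c • v) ?_)⟩
  intro u
  obtain ⟨x, hx⟩ := hsurj u
  rw [hπ] at hx
  have h1 : w • u = (v * x * w) • m := by
    rw [← hx, hn, smul_smul, smul_smul, hcomm, mul_assoc]
  have h2 : (v * x * w) • m = v • (x • p) := by
    rw [hp, smul_smul, smul_smul, mul_assoc]
  have h3 : v • (x • p) = ((c • v) * x * v) • m := by
    rw [hfx x, hn, hcs, smul_mul_assoc, smul_mul_assoc, smul_assoc, mul_smul, mul_smul]
  rw [sub_smul, h1, h2, h3, ← hx, hn, smul_smul, smul_smul, sub_self]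
end

section
/- Let A be an associative unital K-algebra with a faithful simple module M satisfying End_A(M) = K, and let V ⊆ A be a finite-dimensional K-subspace with dim V ≥ 2. Fix v ∈ V \ {0}. If the linear map φ_x : V → A, w ↦ wxv − vxw, is zero for every x ∈ A, then V ⊆ K·v, a contradiction; hence there exists x ∈ A and w ∈ V with wxv ≠ vxw. -/
theorem stmt_1 {K A M : Type*} [Field K] [Ring A] [Algebra K A]
    [AddCommGroup M] [Module A M] [Module K M] [IsScalarTower K A M]
    (hsimple : IsSimpleModule A M)
    (hfaithful : ∀ a : A, (∀ m : M, a • m = 0) → a = 0)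
    (hend : ∀ f : M →ₗ[A] M, ∃ c : K, ∀ m : M, f m = c • m)
    (V : Submodule K A) [FiniteDimensional K V] (hdim : 2 ≤ Module.finrank K V)
    (v : A) (hvV : v ∈ V) (hv : v ≠ 0) :
    ∃ x : A, ∃ w ∈ V, w * x * v ≠ v * x * w := by
  by_contra hcon
  push_neg at hcon
  -- hcon : ∀ x, ∀ w ∈ V, w * x * v = v * x * w
  have hvm : ¬ ∀ m : M, v • m = 0 := fun h => hv (hfaithful v h)
  obtain ⟨m₀, hm₀⟩ := not_forall.mp hvm
  set n : M := v • m₀ with hn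
  -- every nonzero element generates M
  have gen : ∀ (p : M), p ≠ 0 → Submodule.span A ({p} : Set M) = ⊤ := by
    intro p hp
    rcases eq_bot_or_eq_top (Submodule.span A ({p} : Set M)) with h | h
    · exact absurd (Submodule.span_singleton_eq_bot.mp h) hp
    · exact h
  have hmap : A →ₗ[A] M := LinearMap.toSpanSingleton A M n
  let hA : A →ₗ[A] M := LinearMap.toSpanSingleton A M n
  have hsurj : Function.Surjective hA := by
    intro m
    have hm : m ∈ Submodule.span A ({n} : Set M) := by
      rw [gen n hm₀]; trivial
    obtain ⟨a, ha⟩ := Submodule.mem_span_singleton.mp hm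
    exact ⟨a, by simpa [hA, LinearMap.toSpanSingleton_apply] using ha⟩
  -- key: every element of V is a K-multiple of v
  have key : ∀ w ∈ V, ∃ c : K, w = c • v := by
    intro w hwV
    let gA : A →ₗ[A] M := LinearMap.toSpanSingleton A M (w • m₀)
    have hker : LinearMap.ker hA ≤ LinearMap.ker gA := by
      intro x hx
      simp only [LinearMap.mem_ker, hA, gA, LinearMap.toSpanSingleton_apply] at hx ⊢
      -- hx : x • n = 0, goal : x • (w • m₀) = 0
      by_contra hne
      have hgen := gen _ hne
      have hvz : ∀ m : M, v • m = 0 := by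
        intro m
        have hm : m ∈ Submodule.span A ({x • w • m₀} : Set M) := by
          rw [hgen]; trivial
        obtain ⟨y, hy⟩ := Submodule.mem_span_singleton.mp hm
        rw [← hy]
        have h1 : v • y • x • w • m₀ = (v * y * x * w) • m₀ := by
          rw [smul_smul, smul_smul, smul_smul]
        have h2 : (v * (y * x)) * w = (w * (y * x)) * v := (hcon (y * x) w hwV).symm
        have h3 : (w * y) • (x • n) = (v * y * x * w) • m₀ := by
          rw [hn, smul_smul, smul_smul]
          congr 1
          calc w * y * x * v = (w * (y * x)) * v := by rw [mul_assoc w y x]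
            _ = (v * (y * x)) * w := h2.symm
            _ = v * y * x * w := by rw [mul_assoc v y x]
        rw [h1, ← h3, hx, smul_zero]
      exact hv (hfaithful v hvz)
    -- build f : M →ₗ[A] M
    let e := hA.quotKerEquivOfSurjective hsurj
    let f : M →ₗ[A] M := (LinearMap.ker hA).liftQ gA hker ∘ₗ e.symm.toLinearMap
    have hf : ∀ x : A, f (hA x) = gA x := by
      intro x
      have he : e (Submodule.Quotient.mk x) = hA x := rfl
      have : e.symm (hA x) = Submodule.Quotient.mk x := by
        rw [LinearEquiv.symm_apply_eq, he]
      simp only [f, LinearMap.comp_apply, LinearEquiv.coe_toLinearMap, this,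
        Submodule.liftQ_apply]
    obtain ⟨c, hc⟩ := hend f
    -- so for all x : A, x • (w • m₀) = c • (x • n)
    have hrel : ∀ x : A, x • (w • m₀) = c • (x • n) := by
      intro x
      have := hf x
      simp only [hA, gA, LinearMap.toSpanSingleton_apply] at this
      rw [← this, hc]
    refine ⟨c, ?_⟩
    set u : A := w - c • v with hu
    have hum₀ : u • m₀ = (0 : M) := by
      have h1 := hrel 1
      simp only [one_smul] at h1
      rw [hu, sub_smul, h1, hn, smul_assoc, sub_self]
    have huz : ∀ m : M, u • m = 0 := by
      intro m
      obtain ⟨x, rfl⟩ := hsurj m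
      simp only [hA, LinearMap.toSpanSingleton_apply, hn]
      have h1 : u • x • v • m₀ = (u * x * v) • m₀ := by
        rw [smul_smul, smul_smul, mul_assoc]
      have h2 : u * x * v = (v * x) * u := by
        rw [hu]
        have hw := hcon x w hwV
        have hcv : (c • v) * x * v = v * x * (c • v) := by
          rw [smul_mul_assoc, smul_mul_assoc, mul_smul_comm]
        calc (w - c • v) * x * v = w * x * v - (c • v) * x * v := by
              rw [sub_mul, sub_mul]
          _ = v * x * w - v * x * (c • v) := by rw [hw, hcv]
          _ = (v * x) * (w - c • v) := by rw [mul_sub]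
      rw [h1, h2, mul_smul, hum₀, smul_zero]
    exact sub_eq_zero.mp (hfaithful u huz)
  -- hence V ⊆ K • v, contradicting dim V ≥ 2
  have hle : V ≤ Submodule.span K ({v} : Set A) := by
    intro w hw
    obtain ⟨c, rfl⟩ := key w hw
    exact Submodule.smul_mem _ c (Submodule.mem_span_singleton_self v)
  have h1 : Module.finrank K (Submodule.span K ({v} : Set A)) = 1 :=
    finrank_span_singleton hv
  have h2 := Submodule.finrank_mono hle
  omega
end

section
/- Let A be a commutative domain over K with derivations D_1, D_2, … whose extension to Q(A) has differential center equal to K. Let V ⊆ A be a nonzero finite-dimensional K-subspace. Then there exists a nonzero a ∈ A lying in every ideal I of A satisfying D_i(I) ⊆ I for all i and I ∩ V ≠ 0. -/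
open Matrix

section Word
variable {K B ι : Type*} [CommRing K] [CommRing B] [Algebra K B]

/-- action of a word in the derivations -/
def wordD (D : ι → Derivation K B B) : List ι → B →ₗ[K] B
  | [] => LinearMap.id
  | i :: w => (D i).toLinearMap ∘ₗ wordD D w

@[simp] lemma wordD_nil (D : ι → Derivation K B B) (x : B) : wordD D [] x = x := rfl

@[simp] lemma wordD_cons (D : ι → Derivation K B B) (i : ι) (w : List ι) (x : B) :
    wordD D (i :: w) x = D i (wordD D w x) := rfl

end Word

/-- Wronskian-type lemma over a differential field whose constants are K. -/
theorem wronskian_aux {K B ι : Type*} [Field K] [Field B] [Algebra K B]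
    (D : ι → Derivation K B B)
    (hcenter : ∀ f : B, (∀ i, D i f = 0) → ∃ c : K, f = algebraMap K B c)
    {n : ℕ} (v : Fin n → B) (hv : LinearIndependent K v) :
    ∃ θs : Fin n → List ι,
      (Matrix.of fun j k => wordD D (θs j) (v k)).det ≠ 0 := by
  induction n with
  | zero => exact ⟨fun _ => [], by simp [Matrix.det_fin_zero]⟩
  | succ n ih =>
    obtain ⟨θs, hM⟩ := ih (v ∘ Fin.castSucc) (hv.comp _ (Fin.castSucc_injective n))
    set M : Matrix (Fin n) (Fin n) B :=
      Matrix.of fun j k => wordD D (θs j) (v (Fin.castSucc k)) with hMdef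
    have hMu : IsUnit M.det := isUnit_iff_ne_zero.mpr hM
    by_contra hcon
    push_neg at hcon
    -- each extended matrix has det 0
    have hdet0 : ∀ w : List ι,
        (Matrix.of fun j k => wordD D ((Fin.snoc θs w : Fin (n+1) → List ι) j) (v k) :
          Matrix (Fin (n+1)) (Fin (n+1)) B).det = 0 := by
      intro w
      exact hcon (Fin.snoc θs w)
    set b : Fin n → B := fun j => wordD D (θs j) (v (Fin.last n)) with hbdef
    set f : Fin n → B := M⁻¹ *ᵥ b with hfdef
    have hMf : M *ᵥ f = b := by
      rw [hfdef, Matrix.mulVec_mulVec, Matrix.mul_nonsing_inv _ hMu, Matrix.one_mulVec]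
    have huniq : ∀ d : Fin n → B, M *ᵥ d = b → d = f := by
      intro d hd
      have : M⁻¹ *ᵥ (M *ᵥ d) = M⁻¹ *ᵥ b := by rw [hd]
      rwa [Matrix.mulVec_mulVec, Matrix.nonsing_inv_mul _ hMu, Matrix.one_mulVec] at this
    have hker : ∀ d : Fin n → B, M *ᵥ d = 0 → d = 0 := by
      intro d hd
      have : M⁻¹ *ᵥ (M *ᵥ d) = M⁻¹ *ᵥ 0 := by rw [hd]
      rwa [Matrix.mulVec_mulVec, Matrix.nonsing_inv_mul _ hMu, Matrix.one_mulVec,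
        Matrix.mulVec_zero] at this
    -- key identity
    have key : ∀ w : List ι,
        wordD D w (v (Fin.last n)) = ∑ k, f k * wordD D w (v (Fin.castSucc k)) := by
      intro w
      obtain ⟨c, hc0, hc⟩ := (Matrix.exists_mulVec_eq_zero_iff).mpr (hdet0 w)
      have hrow : ∀ j : Fin (n+1),
          (∑ k : Fin n, wordD D ((Fin.snoc θs w : Fin (n+1) → List ι) j) (v (Fin.castSucc k)) * c (Fin.castSucc k))
            + wordD D ((Fin.snoc θs w : Fin (n+1) → List ι) j) (v (Fin.last n)) * c (Fin.last n) = 0 := by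
        intro j
        have := congrFun hc j
        simpa [Matrix.mulVec, dotProduct, Fin.sum_univ_castSucc] using this
      have hclast : c (Fin.last n) ≠ 0 := by
        intro h0
        apply hc0
        have hc' : (fun k => c (Fin.castSucc k)) = 0 := by
          apply hker
          funext j
          have := hrow (Fin.castSucc j)
          simpa [Matrix.mulVec, dotProduct, h0, Fin.snoc_castSucc, hMdef] using this
        funext j
        refine Fin.lastCases h0 (fun k => ?_) j
        exact congrFun hc' k
      set d : Fin n → B := fun k => - c (Fin.castSucc k) / c (Fin.last n) with hddef
      have hrow' : ∀ j : Fin (n+1),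
          wordD D ((Fin.snoc θs w : Fin (n+1) → List ι) j) (v (Fin.last n)) =
            ∑ k, d k * wordD D ((Fin.snoc θs w : Fin (n+1) → List ι) j) (v (Fin.castSucc k)) := by
        intro j
        have h := hrow j
        have hsum : ∑ k, d k * wordD D ((Fin.snoc θs w : Fin (n+1) → List ι) j) (v (Fin.castSucc k))
            = (∑ k, wordD D ((Fin.snoc θs w : Fin (n+1) → List ι) j) (v (Fin.castSucc k)) * c (Fin.castSucc k)) * (-(c (Fin.last n))⁻¹) := by
          rw [Finset.sum_mul]
          refine Finset.sum_congr rfl fun k _ => ?_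
          simp only [hddef, div_eq_mul_inv]
          ring
        rw [hsum]
        have h2 : ∑ k, wordD D ((Fin.snoc θs w : Fin (n+1) → List ι) j) (v (Fin.castSucc k)) * c (Fin.castSucc k)
            = - (wordD D ((Fin.snoc θs w : Fin (n+1) → List ι) j) (v (Fin.last n)) * c (Fin.last n)) := by
          linear_combination h
        rw [h2]
        field_simp
      have hdf : d = f := by
        apply huniq
        funext j
        have := hrow' (Fin.castSucc j)
        simp only [Fin.snoc_castSucc] at this
        simp [Matrix.mulVec, dotProduct, hMdef, hbdef, this, mul_comm]
      have := hrow' (Fin.last n)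
      simpa [Fin.snoc_last, hdf] using this
    -- derivations kill f
    have hDf : ∀ k i, D i (f k) = 0 := by
      intro k i
      have hall : ∀ w : List ι, ∑ k, D i (f k) * wordD D w (v (Fin.castSucc k)) = 0 := by
        intro w
        have h1 := key w
        have h2 := key (i :: w)
        have h3 : D i (wordD D w (v (Fin.last n))) =
            ∑ k, (f k * D i (wordD D w (v (Fin.castSucc k)))
              + wordD D w (v (Fin.castSucc k)) * D i (f k)) := by
          rw [h1, map_sum]
          congr 1; funext k
          rw [Derivation.leibniz]
          simp [smul_eq_mul, mul_comm]
        simp only [wordD_cons] at h2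
        rw [h2, Finset.sum_add_distrib] at h3
        have : ∑ k, wordD D w (v (Fin.castSucc k)) * D i (f k) = 0 := by
          linear_combination -h3
        calc ∑ k, D i (f k) * wordD D w (v (Fin.castSucc k))
            = ∑ k, wordD D w (v (Fin.castSucc k)) * D i (f k) := by
              congr 1; funext k; ring
          _ = 0 := this
      have hMe : M *ᵥ (fun k => D i (f k)) = 0 := by
        funext j
        have := hall (θs j)
        simpa [Matrix.mulVec, dotProduct, hMdef, mul_comm] using this
      exact congrFun (hker _ hMe) k
    -- each f k is a constant
    choose cst hcst using fun k => hcenter (f k) (fun i => hDf k i)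
    -- contradiction with linear independence
    have hrel := key []
    simp only [wordD_nil] at hrel
    rw [Fintype.linearIndependent_iff] at hv
    have hg : ∑ j : Fin (n+1), (Fin.snoc (fun k => cst k) (-1) : Fin (n+1) → K) j • v j = 0 := by
      rw [Fin.sum_univ_castSucc]
      simp only [Fin.snoc_castSucc, Fin.snoc_last]
      have heq : ∀ k : Fin n, cst k • v (Fin.castSucc k) = f k * v (Fin.castSucc k) := by
        intro k
        rw [hcst k, Algebra.smul_def]
      rw [Finset.sum_congr rfl (fun k _ => heq k), ← hrel]
      simp
    have := hv _ hg (Fin.last n)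
    simp at this

theorem stmt_8 {K A ι : Type*} [Field K] [CommRing A] [IsDomain A] [Algebra K A]
    (D : ι → Derivation K A A)
    (DQ : ι → Derivation K (FractionRing A) (FractionRing A))
    (hDQ : ∀ i a, DQ i (algebraMap A (FractionRing A) a) =
      algebraMap A (FractionRing A) (D i a))
    (hcenter : ∀ f : FractionRing A, (∀ i, DQ i f = 0) →
      ∃ c : K, f = algebraMap K (FractionRing A) c)
    (V : Submodule K A) [FiniteDimensional K V] (hV : V ≠ ⊥) :
    ∃ a : A, a ≠ 0 ∧ ∀ I : Ideal A, (∀ i, ∀ x ∈ I, D i x ∈ I) →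
      (∃ u ∈ V, u ≠ 0 ∧ u ∈ I) → a ∈ I := by
  classical
  set Q := FractionRing A with hQ
  have hφinj : Function.Injective (algebraMap A Q) := IsFractionRing.injective A Q
  -- compatibility of word actions
  have hcompat : ∀ (w : List ι) (x : A),
      algebraMap A Q (wordD D w x) = wordD DQ w (algebraMap A Q x) := by
    intro w
    induction w with
    | nil => intro x; simp
    | cons i w ih =>
      intro x
      rw [wordD_cons, wordD_cons, ← ih x, hDQ]
  -- basis of V
  set n := Module.finrank K V with hn
  let bV := Module.finBasis K V
  set v : Fin n → A := fun k => (bV k : A) with hvdef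
  have hlin : LinearIndependent K v := bV.linearIndependent.map' V.subtype V.ker_subtype
  have hlinQ : LinearIndependent K (fun k => algebraMap A Q (v k)) := by
    have := hlin.map' (IsScalarTower.toAlgHom K A Q).toLinearMap
      (LinearMap.ker_eq_bot.mpr (by exact hφinj))
    exact this
  obtain ⟨θs, hdet⟩ := wronskian_aux DQ hcenter _ hlinQ
  set Mat : Matrix (Fin n) (Fin n) A := Matrix.of fun j k => wordD D (θs j) (v k) with hMat
  refine ⟨Mat.det, ?_, ?_⟩
  · intro h0
    apply hdet
    have hmap : (algebraMap A Q).mapMatrix Mat =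
        Matrix.of fun j k => wordD DQ (θs j) (algebraMap A Q (v k)) := by
      ext j k
      simp [hMat, hcompat]
    have := (algebraMap A Q).map_det Mat
    rw [hmap] at this
    rw [← this, h0, map_zero]
  · rintro I hDI ⟨u, huV, hu0, huI⟩
    -- words preserve I
    have hWI : ∀ (w : List ι) (x : A), x ∈ I → wordD D w x ∈ I := by
      intro w
      induction w with
      | nil => intro x hx; simpa using hx
      | cons i w ih => intro x hx; exact hDI i _ (ih x hx)
    set c : Fin n → K := fun k => bV.repr ⟨u, huV⟩ k with hcdef
    have hurepr : ∑ k, c k • v k = u := by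
      have := bV.sum_repr ⟨u, huV⟩
      have := congrArg (V.subtype) this
      rw [map_sum] at this
      simpa [hvdef, hcdef] using this
    have hcne : ∃ k, c k ≠ 0 := by
      by_contra h
      push_neg at h
      apply hu0
      rw [← hurepr]
      simp [h]
    set c' : Fin n → A := fun k => algebraMap K A (c k) with hc'def
    have hMv : Mat *ᵥ c' = fun j => wordD D (θs j) u := by
      funext j
      rw [← hurepr, map_sum]
      simp only [Matrix.mulVec, dotProduct, hMat, Matrix.of_apply, hc'def]
      refine Finset.sum_congr rfl fun k _ => ?_
      rw [_root_.map_smul, Algebra.smul_def, mul_comm]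
    have hIn : ∀ j, (Mat *ᵥ c') j ∈ I := by
      intro j
      rw [hMv]
      exact hWI _ _ huI
    have heq : Mat.adjugate *ᵥ (Mat *ᵥ c') = Mat.det • c' := by
      rw [Matrix.mulVec_mulVec, Matrix.adjugate_mul, Matrix.smul_mulVec,
        Matrix.one_mulVec]
    obtain ⟨k, hk⟩ := hcne
    have h1 : Mat.det * c' k ∈ I := by
      have h2 : (Mat.adjugate *ᵥ (Mat *ᵥ c')) k ∈ I := by
        simp only [Matrix.mulVec, dotProduct]
        exact Ideal.sum_mem _ fun j _ => I.mul_mem_left _ (hIn j)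
      rw [heq] at h2
      simpa [smul_eq_mul] using h2
    have h3 : algebraMap K A ((c k)⁻¹) * (Mat.det * c' k) = Mat.det := by
      rw [hc'def, mul_comm Mat.det, ← mul_assoc, ← _root_.map_mul, inv_mul_cancel₀ hk,
        _root_.map_one, one_mul]
    exact h3 ▸ I.mul_mem_left _ h1
end

section
/- Let A be a countable-dimensional commutative domain over a field K with derivations D_1, D_2, … such that the differential center of Q(A) equals K. Then there exists a sequence a_1, a_2, … of nonzero elements of A such that every nonzero differential ideal of A (ideal I with D_i I ⊆ I for all i) contains a_n for all sufficiently large n. -/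
/-!
For a finite-dimensional subspace `V ⊆ A` we find `b ≠ 0` lying in every differential ideal that
meets `V ∖ {0}`, by induction on `dim V`. Fix `0 ≠ x ∈ V`. Since
`D_i (v / x) = (x D_i v - v D_i x) / x²` and the constants of `Q(A)` are `K`, the common kernel
in `V` of the Wronskians `v ↦ x D_i v - v D_i x` is `K x`, and as `V` is finite-dimensional,
finitely many `i ∈ S` already cut it out. Each Wronskian kills `x`, so it maps `V` onto a space of
smaller dimension, which yields `b_i` by induction; then `b = x ∏_{i ∈ S} b_i` works, because a
differential ideal containing some `v ∈ V ∖ {0}` contains either `x` (when `v ∈ K x`) or a nonzero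
Wronskian of `v`. Exhausting `A` by an increasing chain of finite-dimensional `V_n`, the elements
`b_n` form the required sequence.
-/

open Module Submodule

theorem exists_finset_inf_eq_iInf {α ι : Type*} [CompleteLattice α] [WellFoundedLT α]
    (f : ι → α) : ∃ s : Finset ι, s.inf f = ⨅ i, f i := by
  classical
  obtain ⟨_, ⟨s, rfl⟩, hmin⟩ := wellFounded_lt.has_min (Set.range fun s : Finset ι => s.inf f)
    ⟨_, ∅, rfl⟩
  refine ⟨s, le_antisymm (le_iInf fun i => ?_) (Finset.le_inf fun i _ => iInf_le f i)⟩
  have h : (insert i s).inf f = s.inf f :=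
    (Finset.inf_mono (Finset.subset_insert i s)).eq_of_not_lt (hmin _ ⟨_, rfl⟩)
  exact h ▸ Finset.inf_le (Finset.mem_insert_self i s)

theorem finrank_map_lt_of_mem_ker {K M N : Type*} [DivisionRing K] [AddCommGroup M] [Module K M]
    [AddCommGroup N] [Module K N] (f : M →ₗ[K] N) {V : Submodule K M} [FiniteDimensional K V]
    {x : M} (hxV : x ∈ V) (hx : x ≠ 0) (hfx : f x = 0) :
    finrank K (V.map f) < finrank K V := by
  have hker : 0 < finrank K (LinearMap.ker (f ∘ₗ V.subtype)) :=
    finrank_pos_iff_exists_ne_zero.2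
      ⟨⟨⟨x, hxV⟩, hfx⟩, fun h => hx (congrArg (fun y => (y.1 : M)) h)⟩
  rw [← (f ∘ₗ V.subtype).finrank_range_add_finrank_ker, LinearMap.range_comp, range_subtype]
  omega

theorem exists_monotone_finiteDimensional_iSup_eq_top {K M : Type*} [DivisionRing K]
    [AddCommGroup M] [Module K M] [Nontrivial M] (hM : Module.rank K M ≤ Cardinal.aleph0) :
    ∃ V : ℕ → Submodule K M, (∀ n, FiniteDimensional K (V n)) ∧ Monotone V ∧ ⨆ n, V n = ⊤ := by
  let b := Basis.ofVectorSpace K M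
  have : Countable (Basis.ofVectorSpaceIndex K M) :=
    Cardinal.mk_le_aleph0_iff.1 (b.mk_eq_rank''.trans_le hM)
  have := b.index_nonempty
  obtain ⟨e, he⟩ := exists_surjective_nat (Basis.ofVectorSpaceIndex K M)
  refine ⟨fun n => span K ((b ∘ e) '' Set.Iio n),
    fun n => FiniteDimensional.span_of_finite K ((Set.finite_Iio n).image _),
    fun m n hmn => span_mono (Set.image_mono (Set.Iio_subset_Iio hmn)), ?_⟩
  rw [← span_iUnion, ← Set.image_iUnion, Set.iUnion_Iio, Set.image_univ, Set.range_comp,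
    he.range_eq, Set.image_univ, b.span_eq]

section Differential

variable {K A ι : Type*} [Field K] [CommRing A] [Algebra K A]

def IsDifferentialIdeal (D : ι → Derivation K A A) (I : Ideal A) : Prop :=
  ∀ i, ∀ x ∈ I, D i x ∈ I

def wronskian (D : Derivation K A A) (x : A) : A →ₗ[K] A :=
  x • (D : A →ₗ[K] A) - D x • LinearMap.id

theorem wronskian_apply (D : Derivation K A A) (x v : A) : wronskian D x v = x * D v - D x * v :=
  rfl

theorem wronskian_self (D : Derivation K A A) (x : A) : wronskian D x x = 0 := by
  rw [wronskian_apply, mul_comm, sub_self]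

theorem IsDifferentialIdeal.wronskian_mem {D : ι → Derivation K A A} {I : Ideal A}
    (hI : IsDifferentialIdeal D I) (i : ι) (x : A) {v : A} (hv : v ∈ I) :
    wronskian (D i) x v ∈ I :=
  I.sub_mem (I.mul_mem_left x (hI i v hv)) (I.mul_mem_left _ hv)

theorem exists_smul_eq_of_wronskian_eq_zero [IsDomain A] {L : Type*} [Field L] [Algebra A L]
    [IsFractionRing A L] [Algebra K L] [IsScalarTower K A L]
    (D : ι → Derivation K A A) (DL : ι → Derivation K L L)
    (hDL : ∀ i a, DL i (algebraMap A L a) = algebraMap A L (D i a))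
    (hconst : ∀ f : L, (∀ i, DL i f = 0) → ∃ c : K, f = algebraMap K L c)
    ⦃x v : A⦄ (hx : x ≠ 0) (hxv : ∀ i, wronskian (D i) x v = 0) : ∃ c : K, v = c • x := by
  have hx' : algebraMap A L x ≠ 0 := fun h => hx (IsFractionRing.to_map_eq_zero_iff.1 h)
  obtain ⟨c, hc⟩ := hconst (algebraMap A L v / algebraMap A L x) fun i => by
    rw [Derivation.leibniz_div, hDL, hDL, smul_eq_mul, smul_eq_mul, smul_eq_mul,
      mul_comm (algebraMap A L v), ← map_mul, ← map_mul, ← map_sub, ← wronskian_apply, hxv,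
      map_zero, mul_zero]
  refine ⟨c, IsFractionRing.injective A L ?_⟩
  rw [Algebra.smul_def, map_mul, ← IsScalarTower.algebraMap_apply, ← hc, div_mul_cancel₀ _ hx']

variable [IsDomain A] (D : ι → Derivation K A A)

theorem exists_ne_zero_mem_of_isDifferentialIdeal
    (hD : ∀ ⦃x v : A⦄, x ≠ 0 → (∀ i, wronskian (D i) x v = 0) → ∃ c : K, v = c • x)
    (V : Submodule K A) [FiniteDimensional K V] :
    ∃ b : A, b ≠ 0 ∧ ∀ I : Ideal A, IsDifferentialIdeal D I → ∀ v ∈ V, v ≠ 0 → v ∈ I → b ∈ I := by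
  induction hn : finrank K V using Nat.strong_induction_on generalizing V with
  | _ n ih =>
  rcases eq_or_ne V ⊥ with rfl | hV
  · exact ⟨1, one_ne_zero, fun I _ v hv hv0 _ => absurd ((mem_bot K).1 hv) hv0⟩
  obtain ⟨x, hxV, hx⟩ := V.ne_bot_iff.1 hV
  obtain ⟨S, hS⟩ :=
    exists_finset_inf_eq_iInf fun i => LinearMap.ker (wronskian (D i) x ∘ₗ V.subtype)
  have hmap (i : ι) : ∃ b : A, b ≠ 0 ∧ ∀ I : Ideal A, IsDifferentialIdeal D I →
      ∀ w ∈ V.map (wronskian (D i) x), w ≠ 0 → w ∈ I → b ∈ I :=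
    ih _ (hn ▸ finrank_map_lt_of_mem_ker _ hxV hx (wronskian_self _ x)) _ rfl
  choose B hB0 hB using hmap
  refine ⟨x * ∏ i ∈ S, B i, mul_ne_zero hx (Finset.prod_ne_zero_iff.2 fun i _ => hB0 i), ?_⟩
  intro I hI v hv hv0 hvI
  by_cases hker : ∀ i ∈ S, wronskian (D i) x v = 0
  · have hvS : (⟨v, hv⟩ : V) ∈ ⨅ i, LinearMap.ker (wronskian (D i) x ∘ₗ V.subtype) :=
      hS ▸ mem_finsetInf.2 hker
    obtain ⟨c, rfl⟩ := hD hx fun i => (mem_iInf _).1 hvS i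
    have hc : c ≠ 0 := by rintro rfl; exact hv0 (zero_smul K x)
    have hxI : x ∈ I := by simpa [hc] using I.smul_of_tower_mem c⁻¹ hvI
    exact I.mul_mem_right _ hxI
  · push Not at hker
    obtain ⟨i, hi, hwi⟩ := hker
    have hBi := hB i I hI _ (mem_map_of_mem hv) hwi (hI.wronskian_mem i x hvI)
    exact I.mul_mem_left _ (I.mem_of_dvd (Finset.dvd_prod_of_mem B hi) hBi)

end Differential

theorem stmt_9 {K A ι : Type*} [Field K] [CommRing A] [IsDomain A] [Algebra K A]
    (hcount : Module.rank K A ≤ Cardinal.aleph0)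
    (D : ι → Derivation K A A)
    (DQ : ι → Derivation K (FractionRing A) (FractionRing A))
    (hDQ : ∀ i a, DQ i (algebraMap A (FractionRing A) a) =
      algebraMap A (FractionRing A) (D i a))
    (hcenter : ∀ f : FractionRing A, (∀ i, DQ i f = 0) →
      ∃ c : K, f = algebraMap K (FractionRing A) c) :
    ∃ a : ℕ → A, (∀ n, a n ≠ 0) ∧
      ∀ I : Ideal A, I ≠ ⊥ → (∀ i, ∀ x ∈ I, D i x ∈ I) →
        ∃ N, ∀ n ≥ N, a n ∈ I := by
  obtain ⟨V, hVfin, hVmono, hVtop⟩ := exists_monotone_finiteDimensional_iSup_eq_top hcount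
  choose a ha0 ha using fun n =>
    have := hVfin n
    exists_ne_zero_mem_of_isDifferentialIdeal D
      (exists_smul_eq_of_wronskian_eq_zero D DQ hDQ hcenter) (V n)
  refine ⟨a, ha0, fun I hI hIdiff => ?_⟩
  obtain ⟨x, hxI, hx⟩ := I.ne_bot_iff.1 hI
  have hxV : x ∈ ⨆ n, V n := hVtop ▸ mem_top
  obtain ⟨N, hxN⟩ := (mem_iSup_of_directed V hVmono.directed_le).1 hxV
  exact ⟨N, fun n hn => ha n I hIdiff x (hVmono hn hxN) hx hxI⟩
end
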